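/- Let x be an integral cache state and let x₀ ∈ {0,1}^{2N} be the empty-cache allocation defined by (x₀)_i = 0 for i ∈ {1,…,N} and (x₀)_i = 1 for i ∈ {N+1,…,2N}. Then the caching gain, defined as the cost reduction C(x₀) − C(x), has the closed form C(x₀) − C(x) = ∑_{i=1}^{K−1} α_i · min{ k − σ_i, (∑_{j=1}^{i} x_{π_j}) − σ_i }. -/

import Mathlib

namespace ACAI

/-- `sigma N π i` = number of indices `j ∈ {1,…,i}` with `π j > N`, i.e. the number of
objects among the `i` cheapest that are served from the server. -/
def sigma (N : ℕ) (π : ℕ → ℕ) (i : ℕ) : ℕ :=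
  ((Finset.Icc 1 i).filter (fun j => N < π j)).card

/-- `Kmin N k π` = least index `i` with `sigma N π i = k`. -/
noncomputable def Kmin (N k : ℕ) (π : ℕ → ℕ) : ℕ :=
  sInf {i | sigma N π i = k}

/-- `alpha c π i = c (π (i+1)) - c (π i)`. -/
noncomputable def alpha (c : ℕ → ℝ) (π : ℕ → ℕ) (i : ℕ) : ℝ :=
  c (π (i + 1)) - c (π i)

/-- A fractional cache state: `y ∈ [0,1]^{2N}` with `∑_{i=1}^{N} y i = h` and
`y (i+N) = 1 - y i` for `i ∈ {1,…,N}`. -/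
def IsFrac (N h : ℕ) (y : ℕ → ℝ) : Prop :=
  (∀ i ∈ Finset.Icc 1 (2 * N), y i ∈ Set.Icc (0 : ℝ) 1) ∧
  (∑ i ∈ Finset.Icc 1 N, y i = (h : ℝ)) ∧
  (∀ i ∈ Finset.Icc 1 N, y (i + N) = 1 - y i)

/-- An integral cache state: a fractional cache state with `{0,1}` coordinates. -/
def IsInt (N h : ℕ) (y : ℕ → ℝ) : Prop :=
  IsFrac N h y ∧ ∀ i ∈ Finset.Icc 1 (2 * N), y i = 0 ∨ y i = 1

/-- A request over the augmented catalog `U = {1,…,2N}`: nonnegative costs `c` with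
`c (i+N) = c i + cf` for catalog objects `i ∈ {1,…,N}`, and a bijection `π` of
`{1,…,2N}` sorting the costs nondecreasingly and placing each `i ∈ {1,…,N}` before
`i + N`. -/
def Request (N : ℕ) (cf : ℝ) (c : ℕ → ℝ) (π : ℕ → ℕ) : Prop :=
  (∀ i ∈ Finset.Icc 1 (2 * N), 0 ≤ c i) ∧
  (∀ i ∈ Finset.Icc 1 N, c (i + N) = c i + cf) ∧
  Set.BijOn π (Set.Icc 1 (2 * N)) (Set.Icc 1 (2 * N)) ∧
  (∀ i, 1 ≤ i → i < 2 * N → c (π i) ≤ c (π (i + 1))) ∧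
  (∀ j l, j ∈ Set.Icc 1 (2 * N) → l ∈ Set.Icc 1 (2 * N) →
    π j ≤ N → π l = π j + N → j < l)

/-- The caching gain
`G(y) = ∑_{i=1}^{K-1} α_i · min { k - σ_i, (∑_{j=1}^{i} y_{π j}) - σ_i }`. -/
noncomputable def gain (N k : ℕ) (c : ℕ → ℝ) (π : ℕ → ℕ) (y : ℕ → ℝ) : ℝ :=
  ∑ i ∈ Finset.Icc 1 (Kmin N k π - 1),
    alpha c π i *
      min ((k : ℝ) - sigma N π i) ((∑ j ∈ Finset.Icc 1 i, y (π j)) - sigma N π i)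

open Classical in
/-- `Iset N π i = { j ∈ {1,…,i} : π j ≤ N and π j + N ∉ {π 1, …, π i} }`. -/
noncomputable def Iset (N : ℕ) (π : ℕ → ℕ) (i : ℕ) : Finset ℕ :=
  (Finset.Icc 1 i).filter (fun j => π j ≤ N ∧ ∀ l ∈ Finset.Icc 1 i, π l ≠ π j + N)

/-- The auxiliary (multilinear) gain
`L(y) = ∑_{i=1}^{K-1} α_i (k - σ_i) (1 - ∏_{j ∈ I_i} (1 - y_{π j}/(k - σ_i)))`. -/
noncomputable def aux (N k : ℕ) (c : ℕ → ℝ) (π : ℕ → ℕ) (y : ℕ → ℝ) : ℝ :=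
  ∑ i ∈ Finset.Icc 1 (Kmin N k π - 1),
    alpha c π i * ((k : ℝ) - sigma N π i) *
      (1 - ∏ j ∈ Iset N π i, (1 - y (π j) / ((k : ℝ) - sigma N π i)))

/-- The service cost
`C(x) = ∑_{i=1}^{2N} c (π i) · x_{π i} · 𝟙{∑_{j=1}^{i-1} x_{π j} < k}`. -/
noncomputable def cost (N k : ℕ) (c : ℕ → ℝ) (π : ℕ → ℕ) (x : ℕ → ℝ) : ℝ :=
  ∑ i ∈ Finset.Icc 1 (2 * N),
    c (π i) * x (π i) *
      (if (∑ j ∈ Finset.Icc 1 (i - 1), x (π j)) < (k : ℝ) then 1 else 0)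

/-- The empty-cache allocation: `x₀ i = 0` for `i ∈ {1,…,N}` and `x₀ i = 1` for
`i ∈ {N+1,…,2N}`. -/
def emptyCache (N : ℕ) : ℕ → ℝ := fun i => if i ≤ N then 0 else 1

/-!
For a `0/1` allocation with prefix sums `S_i = ∑_{j ≤ i} x_{π j}`, the summand of the cost is
`c(π_i) (min(k, S_i) - min(k, S_{i-1}))`, so summation by parts turns `C(x)` into
`c(π_{2N}) min(k, N) - ∑_{i < 2N} α_i min(k, S_i)`; for the empty cache `S_i = σ_i`.
Every server copy `m + N` among the `i` cheapest objects is preceded by `m`, and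
`x_m + x_{m+N} = 1`, so `σ_i ≤ S_i`. Hence the terms with `i ≥ K` cancel and the others equal
`α_i min(k - σ_i, S_i - σ_i)`.
-/

open Finset

lemma sum_eq_card_filter_of_zero_or_one {ι : Type*} (s : Finset ι) (a : ι → ℝ)
    (ha : ∀ j ∈ s, a j = 0 ∨ a j = 1) :
    ∑ j ∈ s, a j = #{j ∈ s | a j = 1} := by
  rw [← sum_boole]
  refine sum_congr rfl fun j hj => ?_
  rcases ha j hj with h | h <;> simp [h]

lemma mul_ite_lt_eq_min_sub_min (k m : ℕ) {a : ℝ} (ha : a = 0 ∨ a = 1) :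
    a * (if (m : ℝ) < k then 1 else 0) = min (k : ℝ) (m + a) - min (k : ℝ) m := by
  rcases ha with rfl | rfl
  · simp
  · split_ifs with h
    · have hm : (m : ℝ) + 1 ≤ k := by exact_mod_cast (show m < k by exact_mod_cast h)
      rw [min_eq_right hm, min_eq_right h.le]
      ring
    · rw [not_lt] at h
      rw [min_eq_left (by linarith), min_eq_left h]
      ring

lemma sum_Icc_mul_sub_by_parts {R : Type*} [CommRing R] (w g : ℕ → R) (hg : g 0 = 0) (n : ℕ) :
    ∑ i ∈ Icc 1 n, w i * (g i - g (i - 1)) =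
      w n * g n - ∑ i ∈ Icc 1 (n - 1), (w (i + 1) - w i) * g i := by
  induction n with
  | zero => simp [hg]
  | succ n ih =>
    rw [sum_Icc_succ_top (by omega), ih]
    rcases n with _ | n
    · simp [hg]
    · simp only [Nat.add_sub_cancel]
      rw [sum_Icc_succ_top (by omega)]
      ring

lemma sum_mul_ite_prefix_lt_eq (w a : ℕ → ℝ) (k n : ℕ)
    (ha : ∀ i ∈ Icc 1 n, a i = 0 ∨ a i = 1) :
    ∑ i ∈ Icc 1 n, w i * a i * (if ∑ j ∈ Icc 1 (i - 1), a j < (k : ℝ) then 1 else 0) =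
      w n * min (k : ℝ) (∑ j ∈ Icc 1 n, a j) -
        ∑ i ∈ Icc 1 (n - 1), (w (i + 1) - w i) * min (k : ℝ) (∑ j ∈ Icc 1 i, a j) := by
  rw [← sum_Icc_mul_sub_by_parts w (fun i => min (k : ℝ) (∑ j ∈ Icc 1 i, a j)) (by simp)]
  refine sum_congr rfl fun i hi => ?_
  obtain ⟨p, rfl⟩ : ∃ p, i = p + 1 := ⟨i - 1, by grind⟩
  have hprefix : ∀ j ∈ Icc 1 p, a j = 0 ∨ a j = 1 :=
    fun j hj => ha j (by simp only [mem_Icc] at hi hj ⊢; omega)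
  rw [Nat.add_sub_cancel, sum_Icc_succ_top (by omega),
    sum_eq_card_filter_of_zero_or_one _ _ hprefix, mul_assoc,
    mul_ite_lt_eq_min_sub_min _ _ (ha _ hi)]

lemma sum_comp_eq_of_bijOn {n : ℕ} {π : ℕ → ℕ} (hπ : Set.BijOn π (Set.Icc 1 n) (Set.Icc 1 n))
    (z : ℕ → ℝ) : ∑ j ∈ Icc 1 n, z (π j) = ∑ m ∈ Icc 1 n, z m :=
  sum_nbij π (fun _ hj => by simpa using hπ.mapsTo (by simpa using hj))
    (by simpa using hπ.injOn) (by simpa using hπ.surjOn) (fun _ _ => rfl)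

lemma sum_Icc_two_mul_of_add_eq_one (N : ℕ) (z : ℕ → ℝ)
    (hz : ∀ m ∈ Icc 1 N, z (m + N) = 1 - z m) :
    ∑ m ∈ Icc 1 (2 * N), z m = N := by
  have hsplit : Icc 1 (2 * N) = Icc 1 N ∪ (Icc 1 N).image (· + N) := by
    rw [image_add_right_Icc]; ext m; simp only [mem_Icc, mem_union]; omega
  have hdisj : Disjoint (Icc 1 N) ((Icc 1 N).image (· + N)) := by
    rw [image_add_right_Icc]; exact disjoint_left.2 fun m h1 h2 => by simp at h1 h2; omega
  rw [hsplit, sum_union hdisj, sum_image (by simp), ← sum_add_distrib,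
    sum_congr rfl fun m hm => by rw [hz m hm, add_sub_cancel]]
  simp

lemma exists_le_eq_of_succ_le {f : ℕ → ℕ} (hf : ∀ i, f (i + 1) ≤ f i + 1) {k n : ℕ}
    (h0 : f 0 ≤ k) (hn : k ≤ f n) : ∃ i ≤ n, f i = k := by
  induction n with
  | zero => exact ⟨0, le_rfl, by omega⟩
  | succ n ih =>
    by_cases hk : k ≤ f n
    · obtain ⟨i, hi, hfi⟩ := ih hk
      exact ⟨i, by omega, hfi⟩
    · exact ⟨n + 1, le_rfl, by have := hf n; omega⟩

section Sigma

variable (N : ℕ) (π : ℕ → ℕ)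

lemma sigma_zero : sigma N π 0 = 0 := by simp [sigma]

lemma sigma_mono : Monotone (sigma N π) := fun _ _ h =>
  card_le_card (filter_subset_filter _ (Icc_subset_Icc_right h))

lemma sigma_succ_le (i : ℕ) : sigma N π (i + 1) ≤ sigma N π i + 1 := by
  simp only [sigma, card_filter]
  rw [sum_Icc_succ_top (by omega)]
  split_ifs <;> omega

lemma sum_emptyCache_comp_eq_sigma (i : ℕ) :
    ∑ j ∈ Icc 1 i, emptyCache N (π j) = sigma N π i := by
  rw [sigma, ← sum_boole]
  refine sum_congr rfl fun j _ => ?_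
  simp only [emptyCache]
  split_ifs <;> first | rfl | omega

variable {N π} {k : ℕ}

lemma sigma_two_mul (hπ : Set.BijOn π (Set.Icc 1 (2 * N)) (Set.Icc 1 (2 * N))) :
    sigma N π (2 * N) = N := by
  have hempty : ∀ m ∈ Icc 1 N, emptyCache N (m + N) = 1 - emptyCache N m := by
    intro m hm
    simp only [mem_Icc] at hm
    simp only [emptyCache, if_pos hm.2, if_neg (show ¬m + N ≤ N by omega)]
    norm_num
  exact_mod_cast (sum_emptyCache_comp_eq_sigma N π _).symm.trans
    ((sum_comp_eq_of_bijOn hπ _).trans (sum_Icc_two_mul_of_add_eq_one N _ hempty))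

lemma exists_sigma_eq {n : ℕ} (hk : k ≤ sigma N π n) : ∃ i ≤ n, sigma N π i = k :=
  exists_le_eq_of_succ_le (sigma_succ_le N π) (by simp [sigma_zero]) hk

lemma Kmin_le {n : ℕ} (hk : k ≤ sigma N π n) : Kmin N k π ≤ n := by
  obtain ⟨i, hi, hσi⟩ := exists_sigma_eq hk
  exact (Nat.sInf_le (show i ∈ {i | sigma N π i = k} from hσi) : Kmin N k π ≤ i).trans hi

lemma sigma_lt_of_lt_Kmin {i : ℕ} (hi : i < Kmin N k π) : sigma N π i < k := by
  by_contra! hk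
  exact hi.not_ge (Kmin_le hk)

lemma le_sigma_of_Kmin_le {n i : ℕ} (hk : k ≤ sigma N π n) (hi : Kmin N k π ≤ i) :
    k ≤ sigma N π i := by
  obtain ⟨j, -, hσj⟩ := exists_sigma_eq hk
  have hK : sigma N π (Kmin N k π) = k := Nat.sInf_mem (s := {i | sigma N π i = k}) ⟨j, hσj⟩
  exact hK ▸ sigma_mono N π hi

end Sigma

lemma card_filter_lt_le_sum {N : ℕ} {P : Finset ℕ} (hP : P ⊆ Icc 1 (2 * N))
    (hclosed : ∀ m ∈ Icc 1 N, m + N ∈ P → m ∈ P) {x : ℕ → ℝ}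
    (hx : ∀ m ∈ Icc 1 N, 0 ≤ x m) (hcomp : ∀ m ∈ Icc 1 N, x (m + N) = 1 - x m) :
    (#{m ∈ P | N < m} : ℝ) ≤ ∑ m ∈ P, x m := by
  have hpartner : ∀ m ∈ P.filter (N < ·), m - N ∈ Icc 1 N ∧ m - N + N = m := fun m hm => by
    have := mem_Icc.1 (hP (mem_filter.1 hm).1)
    have := (mem_filter.1 hm).2
    exact ⟨mem_Icc.2 ⟨by omega, by omega⟩, by omega⟩
  have hcard : (#{m ∈ P | N < m} : ℝ) = ∑ m ∈ P with N < m, (x m + x (m - N)) := by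
    rw [card_eq_sum_ones, Nat.cast_sum]
    refine sum_congr rfl fun m hm => ?_
    obtain ⟨hmN, hm⟩ := hpartner m hm
    rw [Nat.cast_one, ← hm, hcomp _ hmN, Nat.add_sub_cancel]
    ring
  have hpartners : ∑ m ∈ P with N < m, x (m - N) ≤ ∑ m ∈ P with ¬N < m, x m := by
    rw [← sum_image fun a ha b hb hab => by
      have := (hpartner a ha).2; have := (hpartner b hb).2; omega]
    refine sum_le_sum_of_subset_of_nonneg (fun m hm => ?_) fun m hm _ => ?_
    · obtain ⟨p, hp, rfl⟩ := mem_image.1 hm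
      obtain ⟨hpN, hp'⟩ := hpartner p hp
      rw [← hp'] at hp
      exact mem_filter.2 ⟨hclosed _ hpN (mem_filter.1 hp).1, by simp only [mem_Icc] at hpN; omega⟩
    · have := mem_Icc.1 (hP (mem_filter.1 hm).1)
      exact hx m (mem_Icc.2 ⟨this.1, not_lt.1 (mem_filter.1 hm).2⟩)
  calc (#{m ∈ P | N < m} : ℝ)
      = ∑ m ∈ P with N < m, x m + ∑ m ∈ P with N < m, x (m - N) := by
        rw [hcard, sum_add_distrib]
    _ ≤ ∑ m ∈ P with N < m, x m + ∑ m ∈ P with ¬N < m, x m := by gcongr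
    _ = ∑ m ∈ P, x m := sum_filter_add_sum_filter_not _ _ _

lemma sigma_le_sum_comp {N : ℕ} {π : ℕ → ℕ}
    (hπ : Set.BijOn π (Set.Icc 1 (2 * N)) (Set.Icc 1 (2 * N)))
    (hord : ∀ j l, j ∈ Set.Icc 1 (2 * N) → l ∈ Set.Icc 1 (2 * N) →
      π j ≤ N → π l = π j + N → j < l)
    {x : ℕ → ℝ} (hx : ∀ m ∈ Icc 1 N, 0 ≤ x m) (hcomp : ∀ m ∈ Icc 1 N, x (m + N) = 1 - x m)
    {i : ℕ} (hi : i ≤ 2 * N) :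
    (sigma N π i : ℝ) ≤ ∑ j ∈ Icc 1 i, x (π j) := by
  have hsub : (Icc 1 i : Set ℕ) ⊆ Set.Icc 1 (2 * N) := by
    simpa using Set.Icc_subset_Icc_right hi
  have hinj : Set.InjOn π (Icc 1 i) := hπ.injOn.mono hsub
  rw [← sum_image hinj, sigma, ← card_image_of_injOn (hinj.mono (filter_subset _ _)),
    ← filter_image]
  refine card_filter_lt_le_sum (fun m hm => ?_) (fun m hm hmN => ?_) hx hcomp
  · obtain ⟨j, hj, rfl⟩ := mem_image.1 hm
    simpa using hπ.mapsTo (hsub hj)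
  · obtain ⟨l, hl, hlm⟩ := mem_image.1 hmN
    have hm' := mem_Icc.1 hm
    obtain ⟨j, hj, rfl⟩ := hπ.surjOn (show m ∈ Set.Icc 1 (2 * N) from ⟨hm'.1, by omega⟩)
    have hjl := hord j l hj (hsub hl) hm'.2 hlm
    exact mem_image_of_mem π (mem_Icc.2 ⟨hj.1, hjl.le.trans (mem_Icc.1 hl).2⟩)

lemma cost_eq_sub_sum_alpha_mul (N k : ℕ) (c : ℕ → ℝ) (π : ℕ → ℕ) (z : ℕ → ℝ)
    (hz : ∀ j ∈ Icc 1 (2 * N), z (π j) = 0 ∨ z (π j) = 1) :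
    cost N k c π z = c (π (2 * N)) * min (k : ℝ) (∑ j ∈ Icc 1 (2 * N), z (π j)) -
      ∑ i ∈ Icc 1 (2 * N - 1), alpha c π i * min (k : ℝ) (∑ j ∈ Icc 1 i, z (π j)) :=
  sum_mul_ite_prefix_lt_eq (fun i => c (π i)) (fun i => z (π i)) k (2 * N) hz

lemma sum_alpha_mul_min_sub_min_eq {N k : ℕ} {c : ℕ → ℝ} {π : ℕ → ℕ}
    (hπ : Set.BijOn π (Set.Icc 1 (2 * N)) (Set.Icc 1 (2 * N)))
    (hord : ∀ j l, j ∈ Set.Icc 1 (2 * N) → l ∈ Set.Icc 1 (2 * N) →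
      π j ≤ N → π l = π j + N → j < l)
    {x : ℕ → ℝ} (hx : ∀ m ∈ Icc 1 N, 0 ≤ x m) (hcomp : ∀ m ∈ Icc 1 N, x (m + N) = 1 - x m)
    (hk : k ≤ N) :
    ∑ i ∈ Icc 1 (2 * N - 1), alpha c π i *
        (min (k : ℝ) (∑ j ∈ Icc 1 i, x (π j)) - min (k : ℝ) (sigma N π i)) =
      ∑ i ∈ Icc 1 (Kmin N k π - 1), alpha c π i *
        min ((k : ℝ) - sigma N π i) ((∑ j ∈ Icc 1 i, x (π j)) - sigma N π i) := by
  have hkσ : k ≤ sigma N π (2 * N) := (sigma_two_mul hπ).symm ▸ hk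
  have hK := Kmin_le hkσ
  rw [← sum_subset (Icc_subset_Icc_right (by omega : Kmin N k π - 1 ≤ 2 * N - 1))]
  · refine sum_congr rfl fun i hi => ?_
    have hσk : (sigma N π i : ℝ) ≤ k := by
      exact_mod_cast (sigma_lt_of_lt_Kmin (by simp only [mem_Icc] at hi; omega)).le
    rw [min_eq_right hσk, min_sub_sub_right]
  · intro i hi hiK
    simp only [mem_Icc, not_and, not_le] at hi hiK
    have hkσi : (k : ℝ) ≤ sigma N π i := by
      exact_mod_cast le_sigma_of_Kmin_le hkσ (by omega)
    have hσS := sigma_le_sum_comp hπ hord hx hcomp (i := i) (by omega)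
    rw [min_eq_left hkσi, min_eq_left (hkσi.trans hσS), sub_self, mul_zero]

theorem gain_closed_form_general
    (N k h : ℕ) (hkh : k ≤ h) (hhN : h ≤ N)
    (cf : ℝ) (c : ℕ → ℝ) (π : ℕ → ℕ)
    (hreq : Request N cf c π)
    (x : ℕ → ℝ) (hx : IsInt N h x) :
    cost N k c π (emptyCache N) - cost N k c π x =
      ∑ i ∈ Finset.Icc 1 (Kmin N k π - 1),
        alpha c π i *
          min ((k : ℝ) - sigma N π i)
            ((∑ j ∈ Finset.Icc 1 i, x (π j)) - sigma N π i) := by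
  obtain ⟨-, -, hπ, -, hord⟩ := hreq
  obtain ⟨⟨hxIcc, -, hcomp⟩, hx01⟩ := hx
  have hxπ : ∀ j ∈ Icc 1 (2 * N), x (π j) = 0 ∨ x (π j) = 1 :=
    fun j hj => hx01 _ (by simpa using hπ.mapsTo (by simpa using hj))
  have hempty : ∀ j ∈ Icc 1 (2 * N), emptyCache N (π j) = 0 ∨ emptyCache N (π j) = 1 :=
    fun j _ => by unfold emptyCache; split_ifs <;> simp
  have hx0 : ∀ m ∈ Icc 1 N, 0 ≤ x m :=
    fun m hm => (hxIcc m (Icc_subset_Icc_right (by omega) hm)).1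
  have htotal : ∑ j ∈ Icc 1 (2 * N), x (π j) = N :=
    (sum_comp_eq_of_bijOn hπ x).trans (sum_Icc_two_mul_of_add_eq_one N x hcomp)
  rw [cost_eq_sub_sum_alpha_mul N k c π _ hempty, cost_eq_sub_sum_alpha_mul N k c π x hxπ]
  simp only [sum_emptyCache_comp_eq_sigma, sigma_two_mul hπ, htotal]
  rw [sub_sub_sub_cancel_left, ← sum_sub_distrib]
  simp only [← mul_sub]
  exact sum_alpha_mul_min_sub_min_eq hπ hord hx0 hcomp (by omega)

/-- **Closed form of the caching gain (Lemma 2).**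
For every integral cache state `x`, the cost reduction with respect to the empty cache
has the closed form
`C(x₀) - C(x) = ∑_{i=1}^{K-1} α_i · min { k - σ_i, (∑_{j=1}^{i} x_{π j}) - σ_i }`. -/
theorem gain_closed_form
    (N k h : ℕ) (hN : 0 < N) (hk : 0 < k) (hkh : k ≤ h) (hhN : h ≤ N)
    (cf : ℝ) (hcf : 0 < cf) (c : ℕ → ℝ) (π : ℕ → ℕ)
    (hreq : Request N cf c π)
    (x : ℕ → ℝ) (hx : IsInt N h x) :
    cost N k c π (emptyCache N) - cost N k c π x =
      ∑ i ∈ Finset.Icc 1 (Kmin N k π - 1),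
        alpha c π i *
          min ((k : ℝ) - sigma N π i)
            ((∑ j ∈ Finset.Icc 1 i, x (π j)) - sigma N π i) :=
  gain_closed_form_general N k h hkh hhN cf c π hreq x hx

end ACAI
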